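/- There exists a constant c > 0 with the following property. Let k1, k2, k3 be nonzero integers with k := k1+k2+k3 and H_3 = k^3 - k1^3 - k2^3 - k3^3. If (i) |H_3| < c·max(|k1|,|k2|,|k3|)^2, and (ii) k_j ≠ k for all j ∈ {1,2,3}, then |k_j| ≥ c·|k| for all j ∈ {1,2,3}. -/

import Mathlib

/-!
Put `a = k₂ + k₃`, `b = k₃ + k₁`, `d = k₁ + k₂`. Non-resonance says that `a, b, d` are nonzero
integers, and `H₃ = 3abd`. Since `b + d - a = 2k₁`, each of `|a|, |b|, |d|` is at most the sum of
the other two plus `2|k₁|`. If `2|k₁| < |k|`, this defect is at most `S/2`, where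
`S = |a| + |b| + |d| ≥ 2|k|`; multiplying the three near-triangle inequalities by `|a|, |b|, |d|`
and adding gives `S² ≤ 8(|ab| + |bd| + |da|) ≤ 24|abd| = 8|H₃|`. As `2|k_j| ≤ S` for every `j`,
this yields `max |k_j|² ≤ 2|H₃|`, so `c = 1/2` works.
-/

theorem cube_add_add_sub_cubes {R : Type*} [CommRing R] (a b c : R) :
    (a + b + c) ^ 3 - a ^ 3 - b ^ 3 - c ^ 3 = 3 * ((a + b) * (b + c) * (c + a)) := by
  ring

theorem two_mul_abs_le_of_two_mul_eq {R : Type*} [Ring R] [LinearOrder R] [IsStrictOrderedRing R]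
    {t : R} (a b c : R) (h : 2 * t = a + b - c) : 2 * |t| ≤ |a| + |b| + |c| :=
  calc 2 * |t| = |a + b - c| := by rw [← h, abs_mul, abs_two]
    _ ≤ |a + b| + |c| := abs_sub _ _
    _ ≤ |a| + |b| + |c| := by gcongr; exact abs_add_le a b

theorem sq_add_add_le_mul_of_le_add_add {R : Type*} [CommRing R] [LinearOrder R]
    [IsStrictOrderedRing R] {p q r δ : R} (hp : 1 ≤ p) (hq : 1 ≤ q) (hr : 1 ≤ r)
    (hpδ : p ≤ q + r + δ) (hqδ : q ≤ p + r + δ) (hrδ : r ≤ p + q + δ)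
    (hδ : 2 * δ ≤ p + q + r) :
    (p + q + r) ^ 2 ≤ 24 * (p * q * r) := by
  have hsq : p ^ 2 + q ^ 2 + r ^ 2 ≤ 2 * (p * q + q * r + r * p) + δ * (p + q + r) := by
    linarith [mul_le_mul_of_nonneg_left hpδ (by linarith : (0 : R) ≤ p),
      mul_le_mul_of_nonneg_left hqδ (by linarith : (0 : R) ≤ q),
      mul_le_mul_of_nonneg_left hrδ (by linarith : (0 : R) ≤ r)]
  have hpairs : p * q + q * r + r * p ≤ 3 * (p * q * r) := by
    linarith [mul_le_mul_of_nonneg_left hr (by positivity : (0 : R) ≤ p * q),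
      mul_le_mul_of_nonneg_left hp (by positivity : (0 : R) ≤ q * r),
      mul_le_mul_of_nonneg_left hq (by positivity : (0 : R) ≤ r * p)]
  have hδS := mul_le_mul_of_nonneg_right hδ (by linarith : (0 : R) ≤ p + q + r)
  linarith

theorem sq_abs_add_abs_add_abs_le_of_add_eq {R : Type*} [CommRing R] [LinearOrder R]
    [IsStrictOrderedRing R] {x y z m : R} (hx : 1 ≤ |x|) (hy : 1 ≤ |y|) (hz : 1 ≤ |z|)
    (h : x + y = z + 2 * m) (hm : 4 * |m| ≤ |x| + |y| + |z|) :
    (|x| + |y| + |z|) ^ 2 ≤ 24 * |x * y * z| := by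
  rw [abs_mul, abs_mul]
  refine sq_add_add_le_mul_of_le_add_add (δ := 2 * |m|) hx hy hz ?_ ?_ ?_ (by linarith)
  all_goals
    refine abs_le.2 ⟨?_, ?_⟩ <;>
      linarith [le_abs_self x, neg_abs_le x, le_abs_self y, neg_abs_le y, le_abs_self z,
        neg_abs_le z, le_abs_self m, neg_abs_le m]

theorem max_abs_sq_le_two_mul_abs_cubic {k1 k2 k3 : ℤ} (h12 : k1 + k2 ≠ 0) (h23 : k2 + k3 ≠ 0)
    (h31 : k3 + k1 ≠ 0) (hk1 : 2 * |k1| < |k1 + k2 + k3|) :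
    max |k1| (max |k2| |k3|) ^ 2 ≤ 2 * |(k1 + k2 + k3) ^ 3 - k1 ^ 3 - k2 ^ 3 - k3 ^ 3| := by
  set S := |k1 + k2| + |k3 + k1| + |k2 + k3|
  have hkS : 2 * |k1 + k2 + k3| ≤ S :=
    (two_mul_abs_le_of_two_mul_eq (k1 + k2) (k3 + k1) (-(k2 + k3)) (by ring)).trans_eq
      (by rw [abs_neg])
  have hSH : S ^ 2 ≤ 8 * |(k1 + k2 + k3) ^ 3 - k1 ^ 3 - k2 ^ 3 - k3 ^ 3| := by
    have := sq_abs_add_abs_add_abs_le_of_add_eq (Int.one_le_abs h12) (Int.one_le_abs h31)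
      (Int.one_le_abs h23) (m := k1) (by ring) (by linarith)
    rw [cube_add_add_sub_cubes, abs_mul, abs_of_pos three_pos]
    simp only [abs_mul] at this ⊢
    linarith
  have hKS : 2 * max |k1| (max |k2| |k3|) ≤ S := by
    rw [mul_max_of_nonneg _ _ zero_le_two, mul_max_of_nonneg _ _ zero_le_two]
    refine max_le ?_ (max_le ?_ ?_)
    · exact two_mul_abs_le_of_two_mul_eq (t := k1) (k1 + k2) (k3 + k1) (k2 + k3) (by ring)
    · linarith [two_mul_abs_le_of_two_mul_eq (t := k2) (k1 + k2) (k2 + k3) (k3 + k1) (by ring)]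
    · linarith [two_mul_abs_le_of_two_mul_eq (t := k3) (k3 + k1) (k2 + k3) (k1 + k2) (by ring)]
  linarith [pow_le_pow_left₀ (by positivity) hKS 2]

theorem abs_add_add_le_two_mul_abs {k1 k2 k3 : ℤ} (h12 : k1 + k2 ≠ 0) (h23 : k2 + k3 ≠ 0)
    (h31 : k3 + k1 ≠ 0)
    (hH : 2 * |(k1 + k2 + k3) ^ 3 - k1 ^ 3 - k2 ^ 3 - k3 ^ 3| < max |k1| (max |k2| |k3|) ^ 2) :
    |k1 + k2 + k3| ≤ 2 * |k1| ∧ |k1 + k2 + k3| ≤ 2 * |k2| ∧ |k1 + k2 + k3| ≤ 2 * |k3| := by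
  have hsum2 : k2 + k3 + k1 = k1 + k2 + k3 := by ring
  have hsum3 : k3 + k1 + k2 = k1 + k2 + k3 := by ring
  refine ⟨?_, ?_, ?_⟩ <;> by_contra! hsmall <;> refine hH.not_ge ?_
  · exact max_abs_sq_le_two_mul_abs_cubic h12 h23 h31 hsmall
  · have key := max_abs_sq_le_two_mul_abs_cubic h23 h31 h12 (by rwa [hsum2])
    rwa [hsum2, show max |k2| (max |k3| |k1|) = max |k1| (max |k2| |k3|) by ac_rfl,
      show (k1 + k2 + k3) ^ 3 - k2 ^ 3 - k3 ^ 3 - k1 ^ 3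
        = (k1 + k2 + k3) ^ 3 - k1 ^ 3 - k2 ^ 3 - k3 ^ 3 by ring] at key
  · have key := max_abs_sq_le_two_mul_abs_cubic h31 h12 h23 (by rwa [hsum3])
    rwa [hsum3, show max |k3| (max |k1| |k2|) = max |k1| (max |k2| |k3|) by ac_rfl,
      show (k1 + k2 + k3) ^ 3 - k3 ^ 3 - k1 ^ 3 - k2 ^ 3
        = (k1 + k2 + k3) ^ 3 - k1 ^ 3 - k2 ^ 3 - k3 ^ 3 by ring] at key

/-- Trichotomy for the cubic dispersion relation: small H₃ and no resonance forces
all frequencies comparable to k. -/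
theorem stmt4 :
    ∃ c : ℝ, 0 < c ∧ ∀ k1 k2 k3 : ℤ, k1 ≠ 0 → k2 ≠ 0 → k3 ≠ 0 →
      ((|(k1 + k2 + k3) ^ 3 - k1 ^ 3 - k2 ^ 3 - k3 ^ 3| : ℤ) : ℝ)
          < c * ((max |k1| (max |k2| |k3|) : ℤ) : ℝ) ^ 2 →
      k1 ≠ k1 + k2 + k3 → k2 ≠ k1 + k2 + k3 → k3 ≠ k1 + k2 + k3 →
      (c * ((|k1 + k2 + k3| : ℤ) : ℝ) ≤ ((|k1| : ℤ) : ℝ)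
        ∧ c * ((|k1 + k2 + k3| : ℤ) : ℝ) ≤ ((|k2| : ℤ) : ℝ)
        ∧ c * ((|k1 + k2 + k3| : ℤ) : ℝ) ≤ ((|k3| : ℤ) : ℝ)) := by
  refine ⟨1 / 2, by norm_num, fun k1 k2 k3 _ _ _ hH r1 r2 r3 => ?_⟩
  have hHℤ : 2 * |(k1 + k2 + k3) ^ 3 - k1 ^ 3 - k2 ^ 3 - k3 ^ 3|
      < max |k1| (max |k2| |k3|) ^ 2 := by
    have : (2 : ℝ) * ((|(k1 + k2 + k3) ^ 3 - k1 ^ 3 - k2 ^ 3 - k3 ^ 3| : ℤ) : ℝ)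
        < ((max |k1| (max |k2| |k3|) : ℤ) : ℝ) ^ 2 := by linarith
    exact_mod_cast this
  have hcast : ∀ j : ℤ, |k1 + k2 + k3| ≤ 2 * j →
      1 / 2 * ((|k1 + k2 + k3| : ℤ) : ℝ) ≤ (j : ℝ) := fun j h => by
    have : ((|k1 + k2 + k3| : ℤ) : ℝ) ≤ 2 * (j : ℝ) := by exact_mod_cast h
    linarith
  obtain ⟨h1, h2, h3⟩ := abs_add_add_le_two_mul_abs (by omega) (by omega) (by omega) hHℤ
  exact ⟨hcast _ h1, hcast _ h2, hcast _ h3⟩
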